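/- arXiv:0705.3712 — 2 statements merged into one kernel-verified Lean document; each statement's English description precedes it below -/
import Mathlib

section
/- Let γ : R → R² be a smooth curve with γ'(s) ≠ 0 for all s (an immersed curve), and suppose the set of parameters s at which the tangent vector γ'(s) is horizontal (second coordinate of γ'(s) equals zero) and the set of inflection parameters are both finite, and likewise for every rotation of γ there are finitely many such parameters. For all but finitely many angles t ∈ [0, π/2], the rotation of γ by angle t has the property that at every parameter s where the rotated tangent vector is horizontal, the rotated curve has nonvanishing curvature at s (equivalently, γ'(s) and γ''(s) are linearly independent). -/
/-- Rotation of the plane by angle `t` (counterclockwise). -/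
noncomputable def planeRot (t : ℝ) (v : ℝ × ℝ) : ℝ × ℝ :=
  (Real.cos t * v.1 - Real.sin t * v.2, Real.sin t * v.1 + Real.cos t * v.2)

noncomputable def rotL (t : ℝ) : (ℝ × ℝ) →L[ℝ] (ℝ × ℝ) :=
  ((Real.cos t) • ContinuousLinearMap.fst ℝ ℝ ℝ - (Real.sin t) • ContinuousLinearMap.snd ℝ ℝ ℝ).prod
  ((Real.sin t) • ContinuousLinearMap.fst ℝ ℝ ℝ + (Real.cos t) • ContinuousLinearMap.snd ℝ ℝ ℝ)

lemma rotL_apply (t : ℝ) (v : ℝ × ℝ) : rotL t v = planeRot t v := by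
  simp [rotL, planeRot, smul_eq_mul, sub_eq_add_neg]

lemma rot_inj (t : ℝ) : Function.Injective (rotL t) := by
  intro v w h
  have h1 := congrArg Prod.fst h
  have h2 := congrArg Prod.snd h
  simp [rotL_apply, planeRot] at h1 h2
  have hpyth := Real.sin_sq_add_cos_sq t
  have e1 : v.1 = w.1 := by
    linear_combination Real.cos t * h1 + Real.sin t * h2 - (v.1 - w.1) * hpyth
  have e2 : v.2 = w.2 := by
    linear_combination -Real.sin t * h1 + Real.cos t * h2 - (v.2 - w.2) * hpyth
  exact Prod.ext e1 e2

lemma deriv_rot (γ : ℝ → ℝ × ℝ) (hd : Differentiable ℝ γ) (t s : ℝ) :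
    deriv (fun s => planeRot t (γ s)) s = planeRot t (deriv γ s) := by
  have h : HasDerivAt (fun s => planeRot t (γ s)) (planeRot t (deriv γ s)) s := by
    have := ((rotL t).hasFDerivAt (x := γ s)).comp_hasDerivAt s (hd s).hasDerivAt
    simpa [Function.comp_def, rotL_apply] using this
  exact h.deriv

/-- Let `γ` be a smooth immersed curve in the plane such that, for every rotation of
`γ`, the sets of parameters with horizontal tangent and of inflection parameters
(where `γ'` and `γ''` are linearly dependent) are finite.  Then for all but finitely
many angles `t ∈ [0, π/2]`, at every parameter where the rotated curve has a
horizontal tangent its curvature is nonvanishing (i.e. the first and second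
derivatives of the rotated curve are linearly independent there). -/
theorem stmt_10 (γ : ℝ → ℝ × ℝ) (hγ : ContDiff ℝ (⊤ : ℕ∞) γ)
    (himm : ∀ s, deriv γ s ≠ 0)
    (hhoriz : ∀ t : ℝ, {s : ℝ | (deriv (fun s => planeRot t (γ s)) s).2 = 0}.Finite)
    (hinfl : ∀ t : ℝ, {s : ℝ | ¬ LinearIndependent ℝ
        ![deriv (fun s => planeRot t (γ s)) s,
          deriv (deriv (fun s => planeRot t (γ s))) s]}.Finite) :
    {t ∈ Set.Icc 0 (Real.pi / 2) | ∃ s : ℝ,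
        (deriv (fun s => planeRot t (γ s)) s).2 = 0 ∧
        ¬ LinearIndependent ℝ
          ![deriv (fun s => planeRot t (γ s)) s,
            deriv (deriv (fun s => planeRot t (γ s))) s]}.Finite := by
  have hd : Differentiable ℝ γ := hγ.differentiable (by simp)
  have hγ' : ContDiff ℝ (⊤ : ℕ∞) γ := hγ.of_le (by simp)
  have hd2 : Differentiable ℝ (deriv γ) :=
    ((contDiff_infty_iff_deriv.mp hγ').2).differentiable (by simp)
  -- first derivative of rotated curve
  have hD1 : ∀ t s, deriv (fun s => planeRot t (γ s)) s = planeRot t (deriv γ s) :=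
    fun t s => deriv_rot γ hd t s
  have hD2 : ∀ t s, deriv (deriv (fun s => planeRot t (γ s))) s
      = planeRot t (deriv (deriv γ) s) := by
    intro t s
    have e : deriv (fun s => planeRot t (γ s)) = fun s => planeRot t (deriv γ s) :=
      funext (hD1 t)
    rw [e]
    exact deriv_rot (deriv γ) hd2 t s
  -- inflection set of γ itself
  set S₀ : Set ℝ := {s | ¬ LinearIndependent ℝ ![deriv γ s, deriv (deriv γ) s]} with hS₀def
  have hS₀ : S₀.Finite := by
    have h := hinfl 0
    have e : (fun s => planeRot 0 (γ s)) = γ := funext fun s => by simp [planeRot]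
    rw [e] at h
    exact h
  -- the bad angles for a fixed parameter s
  have hT : ∀ s : ℝ, ({t : ℝ | Real.sin t * (deriv γ s).1 + Real.cos t * (deriv γ s).2 = 0}
      ∩ Set.Icc 0 (Real.pi / 2)).Finite := by
    intro s
    apply Set.Subsingleton.finite
    rintro t₁ ⟨e1, ht₁⟩ t₂ ⟨e2, ht₂⟩
    simp only [Set.mem_setOf_eq] at e1 e2
    set a := (deriv γ s).1
    set b := (deriv γ s).2
    have hab : a ≠ 0 ∨ b ≠ 0 := by
      by_contra hc
      push_neg at hc
      exact himm s (Prod.ext hc.1 hc.2)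
    have ha : a * Real.sin (t₁ - t₂) = 0 := by
      rw [Real.sin_sub]
      linear_combination Real.cos t₂ * e1 - Real.cos t₁ * e2
    have hb : b * Real.sin (t₁ - t₂) = 0 := by
      rw [Real.sin_sub]
      linear_combination Real.sin t₁ * e2 - Real.sin t₂ * e1
    have hsin : Real.sin (t₁ - t₂) = 0 := by
      rcases hab with h | h
      · exact (mul_eq_zero.mp ha).resolve_left h
      · exact (mul_eq_zero.mp hb).resolve_left h
    obtain ⟨n, hn⟩ := Real.sin_eq_zero_iff.mp hsin
    have hpi : (0:ℝ) < Real.pi := Real.pi_pos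
    have habs : |t₁ - t₂| ≤ Real.pi / 2 := by
      rw [abs_le]
      constructor <;> [skip; skip] <;>
        · simp only [Set.mem_Icc] at ht₁ ht₂; linarith [ht₁.1, ht₁.2, ht₂.1, ht₂.2]
    have hn0 : n = 0 := by
      by_contra hn0
      have h1 : (1:ℝ) ≤ |(n:ℝ)| := by
        have : (1:ℤ) ≤ |n| := Int.one_le_abs hn0
        exact_mod_cast this
      have : Real.pi ≤ |t₁ - t₂| := by
        rw [← hn, abs_mul, abs_of_pos hpi]
        nlinarith
      linarith
    have : t₁ - t₂ = 0 := by rw [← hn, hn0]; simp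
    linarith
  -- main inclusion
  apply Set.Finite.subset (Set.Finite.biUnion hS₀ (fun s _ => hT s))
  rintro t ⟨htIcc, s, hhor, hni⟩
  have hsS₀ : s ∈ S₀ := by
    simp only [hS₀def, Set.mem_setOf_eq]
    intro hli
    apply hni
    have hmap := hli.map' (rotL t).toLinearMap
      (LinearMap.ker_eq_bot.mpr (rot_inj t))
    have e : ((rotL t).toLinearMap ∘ ![deriv γ s, deriv (deriv γ) s])
        = ![deriv (fun s => planeRot t (γ s)) s,
            deriv (deriv (fun s => planeRot t (γ s))) s] := by
      funext i
      fin_cases i <;> simp [hD1, hD2, rotL_apply]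
    rwa [e] at hmap
  refine Set.mem_biUnion hsS₀ ⟨?_, htIcc⟩
  simp only [Set.mem_setOf_eq]
  have := hhor
  rw [hD1 t s] at this
  simpa [planeRot] using this
end

section
/- Let F : R³ → R² be the definite fold model F(u,x,y) = (u, x²+y²), let γ : R → R² be a smooth curve with γ(0) = 0, γ'(0) = (1, 0), and let A : R² → R² be a diffeomorphism carrying the line R × {0} to the curve γ near 0 (so the graphic through the image of the origin is γ). Consider g = p_y ∘ A ∘ F where p_y is vertical projection. If γ has a horizontal tangent at 0, then the origin is a critical point of g, and it is a non-degenerate critical point if and only if the second derivative of the second coordinate of γ at 0 (i.e., the curvature of the graphic at the fold image) is nonzero. -/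
open ContinuousLinearMap

/-- First coordinate projection `ℝ³ → ℝ`. -/
noncomputable def e1' : ℝ × ℝ × ℝ →L[ℝ] ℝ := ContinuousLinearMap.fst ℝ ℝ (ℝ × ℝ)
/-- Second coordinate projection. -/
noncomputable def ex' : ℝ × ℝ × ℝ →L[ℝ] ℝ :=
  (ContinuousLinearMap.fst ℝ ℝ ℝ).comp (ContinuousLinearMap.snd ℝ ℝ (ℝ × ℝ))
/-- Third coordinate projection. -/
noncomputable def ey' : ℝ × ℝ × ℝ →L[ℝ] ℝ :=
  (ContinuousLinearMap.snd ℝ ℝ ℝ).comp (ContinuousLinearMap.snd ℝ ℝ (ℝ × ℝ))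

theorem foldN_hasFDeriv (p : ℝ × ℝ × ℝ) :
    HasFDerivAt (fun p : ℝ × ℝ × ℝ => ((p.1, p.2.1 ^ 2 + p.2.2 ^ 2) : ℝ × ℝ))
      (e1'.prod ((2 * p.2.1) • ex' + (2 * p.2.2) • ey')) p := by
  refine HasFDerivAt.prodMk hasFDerivAt_fst ?_
  have h1 : HasFDerivAt (fun q : ℝ × ℝ × ℝ => q.2.1) ex' p := ex'.hasFDerivAt
  have h2 : HasFDerivAt (fun q : ℝ × ℝ × ℝ => q.2.2) ey' p := ey'.hasFDerivAt
  have hx : HasFDerivAt (fun q : ℝ × ℝ × ℝ => q.2.1 ^ 2) ((2 * p.2.1) • ex') p := by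
    simpa [pow_two, two_mul, add_smul] using h1.fun_mul h1
  have hy : HasFDerivAt (fun q : ℝ × ℝ × ℝ => q.2.2 ^ 2) ((2 * p.2.2) • ey') p := by
    simpa [pow_two, two_mul, add_smul] using h2.fun_mul h2
  exact hx.add hy

/-- The projected model map. -/
noncomputable def foldG (A : ℝ × ℝ → ℝ × ℝ) : ℝ × ℝ × ℝ → ℝ :=
  fun p => (A (p.1, p.2.1 ^ 2 + p.2.2 ^ 2)).2

set_option maxHeartbeats 2000000 in
/-- Lemma `2nderivlem` in the definite fold model: let `F(u,x,y) = (u, x² + y²)`,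
let `γ` be a smooth curve with `γ(0) = 0` and `γ'(0) = (1,0)` (so the graphic has a
horizontal tangent at the fold image), and let `A` be a diffeomorphism of the plane
carrying the line `ℝ × {0}` to `γ` near `0`.  Then the origin is a critical point of
`g = p_y ∘ A ∘ F`, and it is non-degenerate if and only if the second derivative of
the second coordinate of `γ` at `0` is nonzero. -/
theorem stmt_15 (F : ℝ × ℝ × ℝ → ℝ × ℝ)
    (hF : F = fun p => (p.1, p.2.1 ^ 2 + p.2.2 ^ 2))
    (γ : ℝ → ℝ × ℝ) (hγ : ContDiff ℝ (⊤ : ℕ∞) γ)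
    (hγ0 : γ 0 = 0) (hγ'0 : deriv γ 0 = (1, 0))
    (A : ℝ × ℝ → ℝ × ℝ) (hA : ContDiff ℝ (⊤ : ℕ∞) A)
    (hAdiffeo : ∃ B : ℝ × ℝ → ℝ × ℝ, ContDiff ℝ (⊤ : ℕ∞) B ∧
      Function.LeftInverse B A ∧ Function.RightInverse B A)
    (hAline : ∀ᶠ s in nhds (0 : ℝ), A (s, 0) = γ s)
    (g : ℝ × ℝ × ℝ → ℝ) (hg : g = fun p => (A (F p)).2) :
    fderiv ℝ g 0 = 0 ∧
    ((∀ v : ℝ × ℝ × ℝ, v ≠ 0 → ∃ w : ℝ × ℝ × ℝ, fderiv ℝ (fderiv ℝ g) 0 v w ≠ 0) ↔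
      deriv (deriv fun s => (γ s).2) 0 ≠ 0) := by
  have hGg : g = foldG A := by subst hF; subst hg; rfl
  rw [hGg]
  clear hg hF
  obtain ⟨B, hB, hBA, hAB⟩ := hAdiffeo
  set h : ℝ × ℝ → ℝ := fun p => (A p).2 with hhdef
  have hh : ContDiff ℝ (⊤ : ℕ∞) h := contDiff_snd.comp hA
  have hA0 : A 0 = 0 := by
    have := hAline.self_of_nhds
    rw [hγ0] at this; exact this
  -- derivative along the horizontal line
  have hline : ∀ s : ℝ, HasDerivAt (fun t : ℝ => h (t, 0)) (fderiv ℝ h (s, 0) (1, 0)) s := by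
    intro s
    have hl : HasDerivAt (fun t : ℝ => ((t, 0) : ℝ × ℝ)) ((1 : ℝ), (0 : ℝ)) s :=
      HasDerivAt.prodMk (hasDerivAt_id s) (hasDerivAt_const s 0)
    exact HasFDerivAt.comp_hasDerivAt (l := h) s ((hh.differentiable (by simp) (s, 0)).hasFDerivAt) hl
  have hγ2 : ∀ s, HasDerivAt (fun t => (γ t).2) ((deriv γ s).2) s := fun s =>
    (ContinuousLinearMap.snd ℝ ℝ ℝ).hasFDerivAt.comp_hasDerivAt s
      (hγ.differentiable (by simp) s).hasDerivAt
  have hEq : (fun t : ℝ => h (t, 0)) =ᶠ[nhds 0] fun t => (γ t).2 :=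
    hAline.mono fun s hs => by simp [hhdef, hs]
  have hD1 : fderiv ℝ h 0 (1, 0) = 0 := by
    have e1 := (hline 0).deriv
    have e2 := (hγ2 0).deriv
    have e3 := hEq.deriv_eq
    rw [e1, e2, hγ'0] at e3
    simpa [Prod.mk_zero_zero] using e3
  -- the derivative of A at 0 and injectivity
  have hDA : HasFDerivAt A (fderiv ℝ A 0) 0 := (hA.differentiable (by simp) 0).hasFDerivAt
  have hBf : HasFDerivAt B (fderiv ℝ B 0) (A 0) := by
    rw [hA0]; exact (hB.differentiable (by simp) 0).hasFDerivAt
  have hcomp : HasFDerivAt (B ∘ A) ((fderiv ℝ B 0).comp (fderiv ℝ A 0)) 0 := hBf.comp 0 hDA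
  have hid : B ∘ A = _root_.id := funext hBA
  have heqid : (fderiv ℝ B 0).comp (fderiv ℝ A 0) = ContinuousLinearMap.id ℝ (ℝ × ℝ) := by
    have : HasFDerivAt _root_.id ((fderiv ℝ B 0).comp (fderiv ℝ A 0)) 0 := hid ▸ hcomp
    exact this.unique (hasFDerivAt_id 0)
  have hinj : Function.Injective (fderiv ℝ A 0) := by
    intro z z' e
    have hz := ContinuousLinearMap.ext_iff.mp heqid z
    have hz' := ContinuousLinearMap.ext_iff.mp heqid z'
    simp only [ContinuousLinearMap.comp_apply, ContinuousLinearMap.id_apply] at hz hz'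
    rw [← hz, ← hz', e]
  have hDA10 : fderiv ℝ A 0 (1, 0) = (1, 0) := by
    have hlA : ∀ s : ℝ, HasDerivAt (fun t : ℝ => A (t, 0)) (fderiv ℝ A (s, 0) (1, 0)) s := by
      intro s
      have hl : HasDerivAt (fun t : ℝ => ((t, 0) : ℝ × ℝ)) ((1 : ℝ), (0 : ℝ)) s :=
        HasDerivAt.prodMk (hasDerivAt_id s) (hasDerivAt_const s 0)
      exact ((hA.differentiable (by simp) (s, 0)).hasFDerivAt).comp_hasDerivAt s hl
    have e1 := (hlA 0).deriv
    have e2 := (hγ.differentiable (by simp) 0).hasDerivAt.deriv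
    have e3 : deriv (fun t : ℝ => A (t, 0)) 0 = deriv γ 0 :=
      Filter.EventuallyEq.deriv_eq hAline
    rw [e1, e2, hγ'0] at e3
    simpa [Prod.mk_zero_zero] using e3
  have hsnd : fderiv ℝ h 0 = (ContinuousLinearMap.snd ℝ ℝ ℝ).comp (fderiv ℝ A 0) := by
    have : HasFDerivAt h ((ContinuousLinearMap.snd ℝ ℝ ℝ).comp (fderiv ℝ A 0)) 0 :=
      (ContinuousLinearMap.snd ℝ ℝ ℝ).hasFDerivAt.comp 0 hDA
    exact this.fderiv
  set b : ℝ := fderiv ℝ h 0 (0, 1) with hbdef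
  have hb : b ≠ 0 := by
    intro hb0
    have h2 : (fderiv ℝ A 0 ((0 : ℝ), (1 : ℝ))).2 = 0 := by
      rw [hbdef, hsnd] at hb0
      simpa using hb0
    have h3 : fderiv ℝ A 0 ((0 : ℝ), (1 : ℝ)) =
        fderiv ℝ A 0 ((fderiv ℝ A 0 ((0 : ℝ), (1 : ℝ))).1 • ((1 : ℝ), (0 : ℝ))) := by
      rw [map_smul, hDA10]
      ext
      · simp
      · simpa using h2
    have h4 := hinj h3
    rw [Prod.ext_iff] at h4
    simpa using h4.2
  -- second derivative data
  have hfd : ContDiff ℝ (⊤ : ℕ∞) (fderiv ℝ h) := hh.fderiv_right (by simp)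
  have hDfh : HasFDerivAt (fderiv ℝ h) (fderiv ℝ (fderiv ℝ h) 0) 0 :=
    (hfd.differentiable (by simp) 0).hasFDerivAt
  set D2 : (ℝ × ℝ) →L[ℝ] (ℝ × ℝ) →L[ℝ] ℝ := fderiv ℝ (fderiv ℝ h) 0 with hD2def
  set a : ℝ := D2 (1, 0) (1, 0) with hadef
  -- a equals the second derivative of the curve
  have hψ := hDfh.clm_apply (hasFDerivAt_const ((1 : ℝ), (0 : ℝ)) 0)
  have hφd : HasDerivAt (fun s : ℝ => fderiv ℝ h (s, 0) ((1 : ℝ), (0 : ℝ))) a 0 := by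
    have hl : HasDerivAt (fun t : ℝ => ((t, 0) : ℝ × ℝ)) ((1 : ℝ), (0 : ℝ)) 0 :=
      HasDerivAt.prodMk (hasDerivAt_id 0) (hasDerivAt_const 0 0)
    have h5 := hψ.comp_hasDerivAt_of_eq 0 hl (by simp [Prod.mk_zero_zero])
    rw [hadef]
    simpa [Function.comp_def] using h5
  have hφev : deriv (fun s => (γ s).2) =ᶠ[nhds 0]
      fun s : ℝ => fderiv ℝ h (s, 0) ((1 : ℝ), (0 : ℝ)) := by
    filter_upwards [hAline.eventually_nhds] with s hs
    have hEs : (fun t : ℝ => (γ t).2) =ᶠ[nhds s] fun t => h (t, 0) :=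
      hs.mono fun t ht => by simp [hhdef, ht]
    rw [hEs.deriv_eq, (hline s).deriv]
  have ha : a = deriv (deriv fun s => (γ s).2) 0 := by
    rw [hφev.deriv_eq, hφd.deriv]
  -- smoothness of G and its derivative
  have hNsm : ContDiff ℝ (⊤ : ℕ∞) (fun p : ℝ × ℝ × ℝ => ((p.1, p.2.1 ^ 2 + p.2.2 ^ 2) : ℝ × ℝ)) := by
    apply contDiff_fst.prodMk
    exact ((contDiff_fst.comp contDiff_snd).pow 2).add ((contDiff_snd.comp contDiff_snd).pow 2)
  have hgsm : ContDiff ℝ (⊤ : ℕ∞) (foldG A) := hh.comp hNsm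
  have hgd : ∀ p : ℝ × ℝ × ℝ, HasFDerivAt (foldG A)
      ((fderiv ℝ h (p.1, p.2.1 ^ 2 + p.2.2 ^ 2)).comp
        (e1'.prod ((2 * p.2.1) • ex' + (2 * p.2.2) • ey'))) p := fun p =>
    ((hh.differentiable (by simp) _).hasFDerivAt).comp p (foldN_hasFDeriv p)
  have hsm1 : ∀ t : ℝ, fderiv ℝ h 0 ((0 : ℝ), t) = t * b := by
    intro t
    have hw : ((0 : ℝ), t) = t • ((0 : ℝ), (1 : ℝ)) := by simp
    rw [hw, map_smul, hbdef]
    simp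
  have hsm2 : ∀ s t : ℝ, D2 (s, (0 : ℝ)) (t, (0 : ℝ)) = s * (t * a) := by
    intro s t
    have h1 : ((s : ℝ), (0 : ℝ)) = s • ((1 : ℝ), (0 : ℝ)) := by simp
    have h2 : ((t : ℝ), (0 : ℝ)) = t • ((1 : ℝ), (0 : ℝ)) := by simp
    rw [hadef, h1, h2]
    simp only [map_smul, ContinuousLinearMap.smul_apply, smul_eq_mul]
    ring
  -- the critical point
  have hfg0 : fderiv ℝ (foldG A) 0 = 0 := by
    rw [(hgd 0).fderiv]
    refine ContinuousLinearMap.ext fun w => ?_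
    have hred : (e1'.prod ((2 * (0 : ℝ × ℝ × ℝ).2.1) • ex' + (2 * (0 : ℝ × ℝ × ℝ).2.2) • ey')) w
        = ((w.1 : ℝ), (0 : ℝ)) := by
      simp [e1', ex', ey']
    have hw : ((w.1 : ℝ), (0 : ℝ)) = w.1 • ((1 : ℝ), (0 : ℝ)) := by simp
    simp only [ContinuousLinearMap.comp_apply, hred, hw, map_smul]
    simp [hD1, Prod.mk_zero_zero]
  -- the Hessian formula
  have hkey : ∀ v w : ℝ × ℝ × ℝ,
      fderiv ℝ (fderiv ℝ (foldG A)) 0 v w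
        = v.1 * (w.1 * a) + (2 * w.2.1 * v.2.1 + 2 * w.2.2 * v.2.2) * b := by
    intro v w
    have hgf' : HasFDerivAt (fderiv ℝ (foldG A)) (fderiv ℝ (fderiv ℝ (foldG A)) 0) 0 :=
      ((hgsm.fderiv_right (m := (⊤ : ℕ∞)) (by simp)).differentiable (by simp) 0).hasFDerivAt
    have hstep1 := hgf'.clm_apply (hasFDerivAt_const w 0)
    have hfun : (fun p : ℝ × ℝ × ℝ => fderiv ℝ (foldG A) p w)
        = fun p : ℝ × ℝ × ℝ => fderiv ℝ h (p.1, p.2.1 ^ 2 + p.2.2 ^ 2)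
            (((w.1 : ℝ), 2 * p.2.1 * w.2.1 + 2 * p.2.2 * w.2.2) : ℝ × ℝ) := by
      funext p
      rw [(hgd p).fderiv]
      simp [e1', ex', ey']
    have h0 : HasFDerivAt (fderiv ℝ h) D2
        (((0 : ℝ × ℝ × ℝ).1, (0 : ℝ × ℝ × ℝ).2.1 ^ 2 + (0 : ℝ × ℝ × ℝ).2.2 ^ 2) : ℝ × ℝ) := by
      have hz : (((0 : ℝ × ℝ × ℝ).1, (0 : ℝ × ℝ × ℝ).2.1 ^ 2 + (0 : ℝ × ℝ × ℝ).2.2 ^ 2) : ℝ × ℝ)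
          = 0 := by simp
      rw [hz]; exact hDfh
    have hc := h0.comp (0 : ℝ × ℝ × ℝ) (foldN_hasFDeriv 0)
    have hx : HasFDerivAt (fun p : ℝ × ℝ × ℝ => 2 * p.2.1 * w.2.1) ((2 * w.2.1) • ex')
        (0 : ℝ × ℝ × ℝ) := by
      have hfeq : (fun p : ℝ × ℝ × ℝ => 2 * p.2.1 * w.2.1)
          = fun p : ℝ × ℝ × ℝ => (2 * w.2.1) * ex' p := by
        funext p; simp [ex']; ring
      rw [hfeq]
      exact (ex'.hasFDerivAt (x := (0 : ℝ × ℝ × ℝ))).const_mul (2 * w.2.1)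
    have hy : HasFDerivAt (fun p : ℝ × ℝ × ℝ => 2 * p.2.2 * w.2.2) ((2 * w.2.2) • ey')
        (0 : ℝ × ℝ × ℝ) := by
      have hfeq : (fun p : ℝ × ℝ × ℝ => 2 * p.2.2 * w.2.2)
          = fun p : ℝ × ℝ × ℝ => (2 * w.2.2) * ey' p := by
        funext p; simp [ey']; ring
      rw [hfeq]
      exact (ey'.hasFDerivAt (x := (0 : ℝ × ℝ × ℝ))).const_mul (2 * w.2.2)
    have hu : HasFDerivAt
        (fun p : ℝ × ℝ × ℝ => (((w.1 : ℝ), 2 * p.2.1 * w.2.1 + 2 * p.2.2 * w.2.2) : ℝ × ℝ))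
        ((0 : ℝ × ℝ × ℝ →L[ℝ] ℝ).prod ((2 * w.2.1) • ex' + (2 * w.2.2) • ey')) 0 :=
      HasFDerivAt.prodMk (hasFDerivAt_const _ _) (hx.add hy)
    have hΦ := hc.clm_apply hu
    have hchain := (hstep1.fderiv.symm.trans
      ((congrArg (fun f => fderiv ℝ f 0) hfun).trans hΦ.fderiv))
    have hvw := congrArg (fun L : (ℝ × ℝ × ℝ) →L[ℝ] ℝ => L v) hchain
    simp only [ContinuousLinearMap.add_apply, ContinuousLinearMap.comp_apply,
      ContinuousLinearMap.flip_apply, ContinuousLinearMap.prod_apply,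
      ContinuousLinearMap.zero_apply, ContinuousLinearMap.smul_apply,
      ContinuousLinearMap.coe_comp', Function.comp, map_zero, zero_add] at hvw
    rw [hvw]
    simp [e1', ex', ey', hsm1, hsm2, Prod.mk_zero_zero]
    ring
  refine ⟨hfg0, ?_⟩
  constructor
  · intro Hall
    obtain ⟨w, hw⟩ := Hall ((1 : ℝ), (0 : ℝ), (0 : ℝ)) (by simp [Prod.ext_iff])
    rw [hkey] at hw
    rw [← ha]
    intro ha0
    apply hw
    simp [ha0]
  · intro hc0 v hv
    rw [← ha] at hc0
    by_cases hv1 : v.1 = 0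
    · have hv2 : v.2.1 ≠ 0 ∨ v.2.2 ≠ 0 := by
        by_contra hcon
        push_neg at hcon
        exact hv (Prod.ext hv1 (Prod.ext hcon.1 hcon.2))
      have hne : 2 * v.2.1 * v.2.1 + 2 * v.2.2 * v.2.2 ≠ 0 := by
        rcases hv2 with hx | hx
        · have := mul_self_pos.mpr hx
          nlinarith [mul_self_nonneg v.2.2]
        · have := mul_self_pos.mpr hx
          nlinarith [mul_self_nonneg v.2.1]
      refine ⟨((0 : ℝ), v.2.1, v.2.2), ?_⟩
      rw [hkey]
      simp only [hv1, zero_mul, mul_zero, zero_add, add_zero]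
      exact mul_ne_zero hne hb
    · refine ⟨((1 : ℝ), (0 : ℝ), (0 : ℝ)), ?_⟩
      rw [hkey]
      simp only [mul_zero, zero_mul, mul_one, one_mul, add_zero, zero_add]
      exact mul_ne_zero hv1 hc0
end
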